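/- The perfect 8-cycle is self-complementary in Q_4: if C_8 = {∅, {1}, {1,2}, {1,2,3}, {1,2,3,4}, {2,3,4}, {3,4}, {4}} ⊆ V(Q_4), then there exists an automorphism of Q_4 mapping C_8 onto its complement V(Q_4) \ C_8. -/

import Mathlib

/-!
Read a vertex of `Q₄` as a binary word of length 4 and count its switches, the positions where
two consecutive letters differ. `C₈` is exactly the set of words with at most one switch.
Complementing the alternate coordinates 2 and 4 flips every consecutive pair from equal to
different and back, so it sends a word with `s` switches to one with `3 - s`; this involution
therefore exchanges `C₈` (`s ≤ 1`) with its complement (`s ≥ 2`).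
-/

/-- The automorphism of `Q_4` (vertices: `Fin 4 → Bool`) given by a coordinate
permutation `π` and a coordinate complementation pattern `b`; every automorphism
of the hypercube is of this form. -/
def cubeAuto (π : Equiv.Perm (Fin 4)) (b : Fin 4 → Bool) (v : Fin 4 → Bool) :
    Fin 4 → Bool :=
  fun i => xor (v (π.symm i)) (b i)

/-- The perfect 8-cycle `C₈ = {∅,{1},{1,2},{1,2,3},{1,2,3,4},{2,3,4},{3,4},{4}}` in `Q₄`,
with a vertex of `Q₄` identified with the Boolean indicator of a subset of `{1,2,3,4}`. -/
def perfectC8 : Set (Fin 4 → Bool) :=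
  {v | ∃ k : ℕ, k ≤ 4 ∧ v = fun i : Fin 4 => decide ((i : ℕ) < k)} ∪
  {v | ∃ k : ℕ, 1 ≤ k ∧ k ≤ 3 ∧ v = fun i : Fin 4 => decide (k ≤ (i : ℕ))}

open Finset Function

theorem Bool.xor_ne_xor_iff_of_ne {a a' c c' : Bool} (hc : c ≠ c') :
    xor a c ≠ xor a' c' ↔ a = a' := by
  revert a a' c c'
  decide

def switchCount {n : ℕ} (v : Fin (n + 1) → Bool) : ℕ :=
  #{i : Fin n | v i.castSucc ≠ v i.succ}

theorem switchCount_le {n : ℕ} (v : Fin (n + 1) → Bool) : switchCount v ≤ n :=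
  (card_filter_le _ _).trans_eq (card_fin n)

theorem switchCount_xor_of_alternating {n : ℕ} {b : Fin (n + 1) → Bool}
    (hb : ∀ i : Fin n, b i.castSucc ≠ b i.succ) (v : Fin (n + 1) → Bool) :
    switchCount (fun i => xor (v i) (b i)) = n - switchCount v := by
  have hflip : ∀ i : Fin n, xor (v i.castSucc) (b i.castSucc) ≠ xor (v i.succ) (b i.succ) ↔
      ¬v i.castSucc ≠ v i.succ := fun i => by
    rw [Bool.xor_ne_xor_iff_of_ne (hb i), not_not]
  rw [switchCount, filter_congr fun i _ => hflip i, filter_not,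
    card_sdiff_of_subset (filter_subset _ _), card_univ, Fintype.card_fin, switchCount]

theorem perfectC8_eq_setOf_switchCount_le_one : perfectC8 = {v | switchCount v ≤ 1} := by
  ext v
  simp only [perfectC8, Set.mem_union, Set.mem_ofPred_eq, and_left_comm (a := 1 ≤ _)]
  revert v
  decide

theorem cubeAuto_one (b : Fin 4 → Bool) : cubeAuto 1 b = fun v i => xor (v i) (b i) := rfl

theorem cubeAuto_one_involutive (b : Fin 4 → Bool) : Involutive (cubeAuto 1 b) := fun v => by
  funext i
  simp only [cubeAuto_one, Bool.xor_assoc, Bool.xor_self, Bool.xor_false]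

/-- the perfect 8-cycle is self-complementary in `Q₄`: some automorphism
of `Q₄` maps `C₈` onto its complement `V(Q₄) \ C₈`. -/
theorem stmt19 :
    ∃ (π : Equiv.Perm (Fin 4)) (b : Fin 4 → Bool),
      cubeAuto π b '' perfectC8 = perfectC8ᶜ := by
  refine ⟨1, ![false, true, false, true], ?_⟩
  rw [(cubeAuto_one_involutive _).image_eq_preimage_symm]
  ext v
  have hcount := switchCount_xor_of_alternating (n := 3) (b := ![false, true, false, true])
    (by decide) v
  have hle := switchCount_le v
  simp only [perfectC8_eq_setOf_switchCount_le_one, Set.mem_preimage, Set.mem_ofPred_eq,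
    Set.mem_compl_iff, cubeAuto_one, hcount]
  omega
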